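/- In the same setting (A the incidence algebra of a finite poset given by a bound quiver with full commutativity relations), every submodule of an interval module V_I is interval decomposable. -/

import Mathlib

set_option linter.unusedSectionVars false

open scoped Classical

/-- A persistence module over the poset `P`: a functor `P → Vect_k`.
(This models pointwise finite modules over the incidence algebra `A = kQ/ρ` of the poset.) -/
structure PersMod (k P : Type) [Field k] [PartialOrder P] where
  V : P → Type
  [acg : ∀ a, AddCommGroup (V a)]
  [mod : ∀ a, Module k (V a)]
  map : ∀ {a b : P}, a ≤ b → (V a →ₗ[k] V b)
  map_id : ∀ a : P, map (le_refl a) = LinearMap.id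
  map_comp : ∀ {a b c : P} (h₁ : a ≤ b) (h₂ : b ≤ c),
    (map h₂).comp (map h₁) = map (h₁.trans h₂)

attribute [instance] PersMod.acg PersMod.mod

variable {k P : Type} [Field k] [PartialOrder P]

/-- Morphisms of persistence modules, as a `k`-submodule of the product of Hom-spaces. -/
def PersHomSub (M N : PersMod k P) :
    Submodule k (∀ a : P, M.V a →ₗ[k] N.V a) where
  carrier := {f | ∀ ⦃a b : P⦄ (h : a ≤ b), (N.map h).comp (f a) = (f b).comp (M.map h)}
  add_mem' := by
    intro f g hf hg a b h
    simp only [Pi.add_apply, LinearMap.comp_add, LinearMap.add_comp, hf h, hg h]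
  zero_mem' := by intro a b h; simp
  smul_mem' := by
    intro c f hf a b h
    simp only [Pi.smul_apply, LinearMap.comp_smul, LinearMap.smul_comp, hf h]

/-- The space of morphisms `M → N` of persistence modules. -/
def PersHom (M N : PersMod k P) : Type := ↥(PersHomSub M N)

noncomputable instance (M N : PersMod k P) : AddCommGroup (PersHom M N) :=
  inferInstanceAs (AddCommGroup ↥(PersHomSub M N))
noncomputable instance (M N : PersMod k P) : Module k (PersHom M N) :=
  inferInstanceAs (Module k ↥(PersHomSub M N))

/-- Composition of morphisms of persistence modules. -/
def PersHom.comp {M N O : PersMod k P} (g : PersHom N O) (f : PersHom M N) :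
    PersHom M O :=
  ⟨fun a => (g.1 a).comp (f.1 a), by
    intro a b h
    rw [← LinearMap.comp_assoc, g.2 h, LinearMap.comp_assoc, f.2 h, LinearMap.comp_assoc]⟩

def IsMonoP {M N : PersMod k P} (f : PersHom M N) : Prop :=
  ∀ a : P, Function.Injective (f.1 a)

def IsEpiP {M N : PersMod k P} (f : PersHom M N) : Prop :=
  ∀ a : P, Function.Surjective (f.1 a)

def IsIsoP {M N : PersMod k P} (f : PersHom M N) : Prop :=
  ∀ a : P, Function.Bijective (f.1 a)

/-- Convexity of a subset of the poset. -/
def IsConvexSet (I : Set P) : Prop :=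
  ∀ ⦃a b c : P⦄, a ∈ I → c ∈ I → a ≤ b → b ≤ c → b ∈ I

/-- Zigzag-connectivity of a subset of the poset. -/
def IsConnectedSet (I : Set P) : Prop :=
  I.Nonempty ∧ ∀ a ∈ I, ∀ b ∈ I,
    Relation.ReflTransGen (fun x y => x ∈ I ∧ y ∈ I ∧ (x ≤ y ∨ y ≤ x)) a b

/-- An interval of the poset: a connected convex subset. -/
def IsIntervalSet (I : Set P) : Prop := IsConvexSet I ∧ IsConnectedSet I

/-- The underlying linear map of the interval module. -/
noncomputable def intervalMap (I : Set P) (a b : P) :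
    ↥(if a ∈ I then (⊤ : Submodule k k) else ⊥) →ₗ[k]
      ↥(if b ∈ I then (⊤ : Submodule k k) else ⊥) where
  toFun v := ⟨if a ∈ I ∧ b ∈ I then (v : k) else 0, by
    by_cases hb : b ∈ I
    · simp [hb]
    · have hab : ¬(a ∈ I ∧ b ∈ I) := fun h' => hb h'.2
      rw [if_neg hab]; exact Submodule.zero_mem _⟩
  map_add' v w := by
    apply Subtype.ext
    by_cases h' : a ∈ I ∧ b ∈ I <;> simp [h']
  map_smul' c v := by
    apply Subtype.ext
    by_cases h' : a ∈ I ∧ b ∈ I <;> simp [h']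

@[simp] lemma intervalMap_coe (I : Set P) (a b : P)
    (v : ↥(if a ∈ I then (⊤ : Submodule k k) else ⊥)) :
    ((intervalMap I a b v : ↥(if b ∈ I then (⊤ : Submodule k k) else ⊥)) : k)
      = if a ∈ I ∧ b ∈ I then (v : k) else 0 := rfl

lemma intervalMem_zero {I : Set P} {a : P} (ha : a ∉ I)
    (v : ↥(if a ∈ I then (⊤ : Submodule k k) else ⊥)) : (v : k) = 0 := by
  obtain ⟨x, hx⟩ := v
  rw [if_neg ha] at hx
  exact (Submodule.mem_bot k).1 hx

/-- The interval module `V_I` associated to a convex subset `I`. -/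
noncomputable def intervalMod (I : Set P) (hI : IsConvexSet I) : PersMod k P where
  V a := ↥(if a ∈ I then (⊤ : Submodule k k) else ⊥)
  map {a b} _ := intervalMap I a b
  map_id a := by
    ext v
    rw [intervalMap_coe]
    by_cases ha : a ∈ I
    · simp [ha]
    · rw [if_neg (fun h' : a ∈ I ∧ a ∈ I => ha h'.1), LinearMap.id_apply, intervalMem_zero ha v]
  map_comp {a b c} h₁ h₂ := by
    ext v
    rw [LinearMap.comp_apply, intervalMap_coe, intervalMap_coe, intervalMap_coe]
    by_cases ha : a ∈ I <;> by_cases hb : b ∈ I <;> by_cases hc : c ∈ I <;>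
      first
        | (exact absurd (hI ha hc h₁ h₂) hb)
        | simp [ha, hb, hc]

/-- Finite direct sums of persistence modules. -/
noncomputable def dSum {ι : Type} (M : ι → PersMod k P) : PersMod k P where
  V a := ∀ i, (M i).V a
  map {a b} h := LinearMap.pi fun i => ((M i).map h).comp (LinearMap.proj i)
  map_id a := by
    refine LinearMap.ext fun v => ?_
    funext i
    simp [LinearMap.pi_apply, (M i).map_id]
  map_comp {a b c} h₁ h₂ := by
    refine LinearMap.ext fun v => ?_
    funext i
    simpa [LinearMap.pi_apply] using LinearMap.congr_fun ((M i).map_comp h₁ h₂) (v i)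

/-- A persistence module is interval decomposable if it is isomorphic to a finite
direct sum of interval modules. -/
def IntervalDecomposable (W : PersMod k P) : Prop :=
  ∃ (n : ℕ) (J : Fin n → Set P) (hJ : ∀ i, IsIntervalSet (J i))
    (e : PersHom W (dSum fun i => intervalMod (J i) (hJ i).1)), IsIsoP e

/-- The combined morphism `⊕ᵢ Mᵢ → N` of a finite family of morphisms `Mᵢ → N`. -/
noncomputable def combineHom {ι : Type} [Fintype ι] {Mf : ι → PersMod k P}
    {N : PersMod k P} (f : ∀ i, PersHom (Mf i) N) : PersHom (dSum Mf) N :=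
  ⟨fun a => ∑ i, ((f i).1 a).comp (LinearMap.proj i), by
    intro a b h
    refine LinearMap.ext fun v => ?_
    simp only [LinearMap.comp_apply, LinearMap.sum_apply, LinearMap.proj_apply, map_sum]
    refine Finset.sum_congr rfl fun i _ => ?_
    have := LinearMap.congr_fun ((f i).2 h) (v i)
    exact this⟩

/-!
Since `V_I` is one-dimensional on `I` and its structure maps are identities there, a submodule
`W` of `V_I` is one-dimensional exactly on its support `S`, which is closed upwards inside `I`
and hence convex; rescaling one nonzero vector at each point identifies `W` with `V_S`. A convex
set is the disjoint union of its zigzag components, these are intervals, and no two comparable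
points of `S` lie in different components, so `V_S` is the direct sum of the interval modules of
its components.
-/

noncomputable def PersHom.pi {ι : Type} {M : PersMod k P} {N : ι → PersMod k P}
    (f : ∀ i, PersHom M (N i)) : PersHom M (dSum N) :=
  ⟨fun a => LinearMap.pi fun i => (f i).1 a, by
    intro a b h
    refine LinearMap.ext fun x => funext fun i => ?_
    exact LinearMap.congr_fun ((f i).2 h) x⟩

lemma IsIsoP.comp {M N O : PersMod k P} {g : PersHom N O} {f : PersHom M N}
    (hg : IsIsoP g) (hf : IsIsoP f) : IsIsoP (g.comp f) :=
  fun a => (hg a).comp (hf a)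

lemma IntervalDecomposable.of_isIsoP {M N : PersMod k P} (e : PersHom M N) (he : IsIsoP e)
    (hN : IntervalDecomposable N) : IntervalDecomposable M := by
  obtain ⟨n, J, hJ, e', he'⟩ := hN
  exact ⟨n, J, hJ, e'.comp e, he'.comp he⟩

lemma LinearMap.bijective_of_subsingleton {M N : Type} [AddCommGroup M] [Module k M]
    [AddCommGroup N] [Module k N] [Subsingleton M] [Subsingleton N] (f : M →ₗ[k] N) :
    Function.Bijective f :=
  ⟨Function.injective_of_subsingleton f, fun _ => ⟨0, Subsingleton.elim _ _⟩⟩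

namespace intervalMod

variable (I : Set P) (hI : IsConvexSet I)

noncomputable def coord (a : P) : (intervalMod (k := k) I hI).V a →ₗ[k] k :=
  Submodule.subtype (if a ∈ I then (⊤ : Submodule k k) else ⊥)

noncomputable def ofCoord (a : P) : k →ₗ[k] (intervalMod (k := k) I hI).V a :=
  show k →ₗ[k] ↥(if a ∈ I then (⊤ : Submodule k k) else ⊥) from
  { toFun := fun c => ⟨if a ∈ I then c else 0, by
      by_cases ha : a ∈ I
      · simp [ha]
      · rw [if_neg ha, if_neg ha]; exact Submodule.zero_mem _⟩
    map_add' := fun c d => by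
      apply Subtype.ext
      by_cases ha : a ∈ I <;> simp [ha]
    map_smul' := fun c d => by
      apply Subtype.ext
      by_cases ha : a ∈ I <;> simp [ha] }

variable {I hI}

lemma coord_injective (a : P) : Function.Injective (coord (k := k) I hI a) :=
  Subtype.val_injective

lemma coord_eq_zero {a : P} (ha : a ∉ I) (v : (intervalMod (k := k) I hI).V a) :
    coord I hI a v = 0 :=
  intervalMem_zero ha v

lemma coord_map {a b : P} (h : a ≤ b) (v : (intervalMod (k := k) I hI).V a) :
    coord I hI b ((intervalMod I hI).map h v) = if a ∈ I ∧ b ∈ I then coord I hI a v else 0 :=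
  rfl

lemma coord_ofCoord (a : P) (c : k) :
    coord I hI a (ofCoord I hI a c) = if a ∈ I then c else 0 :=
  rfl

lemma subsingleton {a : P} (ha : a ∉ I) : Subsingleton ((intervalMod (k := k) I hI).V a) :=
  ⟨fun v w => coord_injective a (by rw [coord_eq_zero ha, coord_eq_zero ha])⟩

section lift

variable {M : PersMod k P}

noncomputable def lift (J : Set P) (hJ : IsConvexSet J) (g : ∀ a, M.V a →ₗ[k] k)
    (hg : ∀ ⦃a b : P⦄ (h : a ≤ b) (x : M.V a),
      b ∈ J → g b (M.map h x) = if a ∈ J then g a x else 0) :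
    PersHom M (intervalMod J hJ) :=
  ⟨fun a => (ofCoord J hJ a).comp (g a), by
    intro a b h
    refine LinearMap.ext fun x => coord_injective (hI := hJ) b ?_
    change coord J hJ b ((intervalMod J hJ).map h (ofCoord J hJ a (g a x)))
      = coord J hJ b (ofCoord J hJ b (g b (M.map h x)))
    rw [coord_map, coord_ofCoord, coord_ofCoord]
    by_cases hb : b ∈ J
    · by_cases ha : a ∈ J <;> simp [ha, hb, hg h x hb]
    · simp [hb]⟩

lemma coord_lift_apply {J : Set P} {hJ : IsConvexSet J} (g : ∀ a, M.V a →ₗ[k] k)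
    (hg : ∀ ⦃a b : P⦄ (h : a ≤ b) (x : M.V a),
      b ∈ J → g b (M.map h x) = if a ∈ J then g a x else 0) (a : P) (x : M.V a) :
    coord J hJ a ((lift J hJ g hg).1 a x) = if a ∈ J then g a x else 0 :=
  coord_ofCoord a (g a x)

end lift

section restrict

variable {S : Set P} (hS : IsConvexSet S)

noncomputable def restrict {J : Set P} (hJ : IsConvexSet J) (hJS : J ⊆ S)
    (hdown : ∀ ⦃a b : P⦄, a ∈ S → a ≤ b → b ∈ J → a ∈ J) :
    PersHom (intervalMod (k := k) S hS) (intervalMod J hJ) :=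
  lift J hJ (coord S hS) fun a b h v hb => by
    rw [coord_map]
    by_cases ha : a ∈ S
    · simp [ha, hJS hb, hdown ha h hb]
    · simp [ha, coord_eq_zero ha]

lemma coord_restrict_apply {J : Set P} (hJ : IsConvexSet J) (hJS : J ⊆ S)
    (hdown : ∀ ⦃a b : P⦄, a ∈ S → a ≤ b → b ∈ J → a ∈ J) (a : P)
    (v : (intervalMod (k := k) S hS).V a) :
    coord J hJ a ((restrict hS hJ hJS hdown).1 a v) = if a ∈ J then coord S hS a v else 0 :=
  coord_lift_apply _ _ a v

theorem isIsoP_pi_restrict {ι : Type} (J : ι → Set P) (hJ : ∀ i, IsConvexSet (J i))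
    (hJS : ∀ i, J i ⊆ S) (hdown : ∀ i ⦃a b : P⦄, a ∈ S → a ≤ b → b ∈ J i → a ∈ J i)
    (hcover : ∀ a ∈ S, ∃! i, a ∈ J i) :
    IsIsoP (PersHom.pi fun i => restrict (k := k) hS (hJ i) (hJS i) (hdown i)) := by
  intro a
  by_cases ha : a ∈ S
  · obtain ⟨i₀, hi₀, huniq⟩ := hcover a ha
    have hcoord : ∀ i (v : (intervalMod (k := k) S hS).V a),
        coord (J i) (hJ i) a
          ((PersHom.pi fun i => restrict (k := k) hS (hJ i) (hJS i) (hdown i)).1 a v i)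
          = if a ∈ J i then coord S hS a v else 0 :=
      fun i => coord_restrict_apply hS (hJ i) (hJS i) (hdown i) a
    refine ⟨fun v w hvw => coord_injective a ?_, fun y => ?_⟩
    · simpa [hcoord, hi₀] using congrArg (coord (J i₀) (hJ i₀) a) (congrFun hvw i₀)
    · refine ⟨ofCoord S hS a (coord (J i₀) (hJ i₀) a (y i₀)), funext fun i => ?_⟩
      apply coord_injective a
      rw [hcoord, coord_ofCoord, if_pos ha]
      by_cases hi : a ∈ J i
      · rw [if_pos hi, huniq i hi]
      · rw [if_neg hi, coord_eq_zero hi]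
  · have := subsingleton (k := k) (hI := hS) ha
    have : ∀ i, Subsingleton ((intervalMod (k := k) (J i) (hJ i)).V a) :=
      fun i => subsingleton fun h => ha (hJS i h)
    exact LinearMap.bijective_of_subsingleton (M := (intervalMod (k := k) S hS).V a)
      (N := ∀ i, (intervalMod (k := k) (J i) (hJ i)).V a) _

end restrict

end intervalMod

def PersMod.support (M : PersMod k P) : Set P := {a | Nontrivial (M.V a)}

namespace intervalMod

variable {I : Set P} {hI : IsConvexSet I} {W : PersMod k P} {f : PersHom W (intervalMod I hI)}

lemma coord_hom_map (f : PersHom W (intervalMod I hI)) {a b : P} (h : a ≤ b) (x : W.V a) :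
    coord I hI b (f.1 b (W.map h x)) = if a ∈ I ∧ b ∈ I then coord I hI a (f.1 a x) else 0 :=
  (congrArg (coord I hI b) (LinearMap.congr_fun (f.2 h) x)).symm

lemma coord_hom_ne_zero (hf : IsMonoP f) {a : P} {x : W.V a} (hx : x ≠ 0) :
    coord I hI a (f.1 a x) ≠ 0 := by
  rw [← map_zero (coord I hI a), ← map_zero (f.1 a)]
  exact ((coord_injective a).comp (hf a)).ne hx

lemma support_subset (hf : IsMonoP f) : W.support ⊆ I := fun a ha => by
  by_contra haI
  obtain ⟨x, hx⟩ := @exists_ne _ ha 0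
  exact coord_hom_ne_zero hf hx (coord_eq_zero haI _)

lemma mem_support_of_le (hf : IsMonoP f) {a b : P} (ha : a ∈ W.support) (hab : a ≤ b)
    (hb : b ∈ I) : b ∈ W.support := by
  obtain ⟨x, hx⟩ := @exists_ne _ ha 0
  refine nontrivial_of_ne (W.map hab x) 0 fun h0 => coord_hom_ne_zero hf hx ?_
  have hnat := coord_hom_map f hab x
  rwa [h0, map_zero, map_zero, if_pos ⟨support_subset hf ha, hb⟩, eq_comm] at hnat

lemma isConvexSet_support (hf : IsMonoP f) : IsConvexSet W.support :=
  fun _ _ _ ha hc hab hbc =>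
    mem_support_of_le hf ha hab (hI (support_subset hf ha) (support_subset hf hc) hab hbc)

noncomputable def toSupport (hf : IsMonoP f) :
    PersHom W (intervalMod W.support (isConvexSet_support hf)) :=
  lift _ _ (fun a => (coord I hI a).comp (f.1 a)) fun a b h x hb => by
    rw [LinearMap.comp_apply, coord_hom_map]
    by_cases ha : a ∈ W.support
    · simp [ha, support_subset hf ha, support_subset hf hb]
    · have hx : x = 0 := (not_nontrivial_iff_subsingleton.mp ha).elim x 0
      simp [ha, hx]

theorem isIsoP_toSupport (hf : IsMonoP f) : IsIsoP (toSupport hf) := by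
  intro a
  have hcoord : ∀ x : W.V a, coord _ _ a ((toSupport hf).1 a x)
      = if a ∈ W.support then coord I hI a (f.1 a x) else 0 := coord_lift_apply _ _ a
  by_cases ha : a ∈ W.support
  · obtain ⟨x₀, hx₀⟩ := @exists_ne _ ha 0
    refine ⟨fun x y hxy => hf a (coord_injective a ?_), fun y => ?_⟩
    · simpa [hcoord, ha] using congrArg (coord _ _ a) hxy
    · refine ⟨(coord _ _ a y / coord I hI a (f.1 a x₀)) • x₀, coord_injective a ?_⟩
      rw [hcoord, if_pos ha, map_smul, map_smul, smul_eq_mul,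
        div_mul_cancel₀ _ (coord_hom_ne_zero hf hx₀)]
  · have := not_nontrivial_iff_subsingleton.mp ha
    have := subsingleton (k := k) (hI := isConvexSet_support hf) ha
    exact LinearMap.bijective_of_subsingleton _

end intervalMod

def zigzagRel (S : Set P) (x y : P) : Prop := x ∈ S ∧ y ∈ S ∧ (x ≤ y ∨ y ≤ x)

instance (S : Set P) : Std.Symm (zigzagRel S) := ⟨fun _ _ h => ⟨h.2.1, h.1, h.2.2.symm⟩⟩

def zigzagComponent (S : Set P) (a : P) : Set P := {b | Relation.ReflTransGen (zigzagRel S) a b}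

section zigzagComponent

variable {S : Set P} {a b : P}

lemma mem_zigzagComponent_self (S : Set P) (a : P) : a ∈ zigzagComponent S a :=
  Relation.ReflTransGen.refl

lemma zigzagComponent_subset (ha : a ∈ S) : zigzagComponent S a ⊆ S := fun b hb => by
  rcases hb.cases_tail with rfl | ⟨c, -, hcb⟩
  exacts [ha, hcb.2.1]

lemma zigzagComponent_eq_of_mem (hb : b ∈ zigzagComponent S a) :
    zigzagComponent S b = zigzagComponent S a :=
  Set.ext fun _ => ⟨hb.trans, (symm hb : Relation.ReflTransGen _ b a).trans⟩

lemma isIntervalSet_zigzagComponent (hS : IsConvexSet S) (ha : a ∈ S) :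
    IsIntervalSet (zigzagComponent S a) := by
  have hsub := zigzagComponent_subset ha
  refine ⟨fun x y z hx hz hxy hyz => ?_, ⟨a, mem_zigzagComponent_self S a⟩, ?_⟩
  · exact hx.tail ⟨hsub hx, hS (hsub hx) (hsub hz) hxy hyz, Or.inl hxy⟩
  · have hpath : ∀ b ∈ zigzagComponent S a,
        Relation.ReflTransGen (zigzagRel (zigzagComponent S a)) a b := by
      intro b hb
      induction hb with
      | refl => exact Relation.ReflTransGen.refl
      | tail hac hcb ih => exact ih.tail ⟨hac, hac.tail hcb, hcb.2.2⟩
    exact fun x hx y hy => (symm (hpath x hx)).trans (hpath y hy)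

lemma exists_fin_zigzagComponents [Finite P] (S : Set P) :
    ∃ (n : ℕ) (J : Fin n → Set P), (∀ i, ∃ a ∈ S, J i = zigzagComponent S a) ∧
      ∀ a ∈ S, ∃! i, a ∈ J i := by
  obtain ⟨n, ⟨e⟩⟩ := Finite.exists_equiv_fin (Set.range fun a : S => zigzagComponent S a)
  refine ⟨n, fun i => e.symm i, fun i => ?_, fun a ha => ⟨e ⟨_, ⟨a, ha⟩, rfl⟩, ?_, fun i hi => ?_⟩⟩
  · obtain ⟨⟨a, ha⟩, h⟩ := (e.symm i).2
    exact ⟨a, ha, h.symm⟩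
  · simpa using mem_zigzagComponent_self S a
  · obtain ⟨⟨b, _⟩, hb⟩ := (e.symm i).2
    refine e.symm_apply_eq.mp (Subtype.ext ?_)
    change a ∈ (e.symm i : Set P) at hi
    change (e.symm i : Set P) = zigzagComponent S a
    rw [← hb] at hi ⊢
    exact (zigzagComponent_eq_of_mem hi).symm

end zigzagComponent

theorem intervalDecomposable_intervalMod [Finite P] {S : Set P} (hS : IsConvexSet S) :
    IntervalDecomposable (intervalMod (k := k) S hS) := by
  obtain ⟨n, J, hJ, hcover⟩ := exists_fin_zigzagComponents S
  choose c hc hJc using hJ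
  have hJint i : IsIntervalSet (J i) := hJc i ▸ isIntervalSet_zigzagComponent hS (hc i)
  have hJS i : J i ⊆ S := hJc i ▸ zigzagComponent_subset (hc i)
  have hdown i ⦃a b : P⦄ (ha : a ∈ S) (hab : a ≤ b) (hb : b ∈ J i) : a ∈ J i := by
    rw [hJc i] at hb ⊢
    exact hb.tail ⟨zigzagComponent_subset (hc i) hb, ha, Or.inr hab⟩
  exact ⟨n, J, hJint, _,
    intervalMod.isIsoP_pi_restrict hS J (fun i => (hJint i).1) hJS hdown hcover⟩

/-- Over the incidence algebra of a finite poset (presented by an acyclic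
quiver with full commutativity relations), every submodule `W` of an interval module
`V_I` is interval decomposable. -/
theorem submodule_of_interval_module_is_interval_decomposable
    {k P : Type} [Field k] [PartialOrder P] [Fintype P]
    (I : Set P) (hI : IsIntervalSet I) (W : PersMod k P)
    (hW : ∃ f : PersHom W (intervalMod I hI.1), IsMonoP f) :
    IntervalDecomposable W := by
  obtain ⟨f, hf⟩ := hW
  exact (intervalDecomposable_intervalMod _).of_isIsoP _ (intervalMod.isIsoP_toSupport hf)
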